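/- arXiv:1603.04180 — 3 statements merged into one kernel-verified Lean document; each statement's English description precedes it below -/
import Mathlib

section
/- Let k ≥ 3 and 1 ≤ ℓ < k/2 be integers, let R be a k-uniform hypergraph, let e = {v₁,…,v_k} be an edge of R with k distinct vertices, and let q ∈ (0,1]. Then there exists a (q/(2(k−ℓ−1)))-hom(C_ℓ)-tiling h of R, nonzero only on homomorphisms with image contained in e, such that w_h(v_i) = q for all i ∈ [k−2] and w_h(v_{k−1}) = w_h(v_k) = q(k−2)/(2(k−ℓ−1)). Moreover, there exists a (q/(2(k−ℓ)))-hom(C_ℓ)-tiling h' of R, nonzero only on homomorphisms with image contained in e, such that w_{h'}(v_i) = q for all i ∈ [k]. -/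
open Finset

/-- The first edge `{1,…,k}` of the cherry `C_ℓ` on the vertex set `[2k-2ℓ]`. -/
def cherryEdge1 (k l : ℕ) : Finset (Fin (2 * k - 2 * l)) :=
  Finset.univ.filter fun i => (i : ℕ) < k

/-- The second edge `{k-2ℓ+1,…,2k-2ℓ}` of the cherry `C_ℓ`. -/
def cherryEdge2 (k l : ℕ) : Finset (Fin (2 * k - 2 * l)) :=
  Finset.univ.filter fun i => k - 2 * l ≤ (i : ℕ)

/-- `φ` is a hypergraph homomorphism from the cherry `C_ℓ` to the hypergraph `ER`. -/
def IsCherryHom (k l : ℕ) {t : ℕ} (ER : Finset (Finset (Fin t)))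
    (φ : Fin (2 * k - 2 * l) → Fin t) : Prop :=
  (cherryEdge1 k l).image φ ∈ ER ∧ (cherryEdge2 k l).image φ ∈ ER

/-- The weight `w_h(v)` of the vertex `v` under the weight function `h` on maps from
`C_ℓ` to `R` (a map occurring with multiplicity is recorded by summing its weights). -/
def weightAt (k l : ℕ) {t : ℕ} (h : (Fin (2 * k - 2 * l) → Fin t) → ℝ) (v : Fin t) : ℝ :=
  ∑ φ : Fin (2 * k - 2 * l) → Fin t,
    ((Finset.univ.filter fun u => φ u = v).card : ℝ) * h φ

/-- `h` is a `β`-hom(`C_ℓ`)-tiling of the hypergraph `ER`: every map with nonzero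
weight is a homomorphism from `C_ℓ` to `ER` whose weight is a positive integer
multiple of `β`, and every vertex has weight at most `1`. -/
def IsHomTiling (k l : ℕ) {t : ℕ} (β : ℝ) (ER : Finset (Finset (Fin t)))
    (h : (Fin (2 * k - 2 * l) → Fin t) → ℝ) : Prop :=
  (∀ φ, h φ ≠ 0 → IsCherryHom k l ER φ ∧ ∃ a : ℕ, 0 < a ∧ h φ = (a : ℝ) * β) ∧
  ∀ v, weightAt k l h v ≤ 1

/-- The total weight of a tiling. -/
def tilingWeight (k l : ℕ) {t : ℕ} (h : (Fin (2 * k - 2 * l) → Fin t) → ℝ) : ℝ :=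
  ∑ v, weightAt k l h v


lemma shift_mod (d x m : ℕ) (hm : m < d) :
    (x + ((m + (d - x % d)) % d)) % d = m := by
  have hd : 0 < d := by omega
  have hx : x % d < d := Nat.mod_lt _ hd
  rw [Nat.add_mod_mod, ← Nat.mod_add_mod]
  have h : x % d + (m + (d - x % d)) = m + d := by omega
  rw [h, Nat.add_mod_right, Nat.mod_eq_of_lt hm]

lemma exists_shift (d x m : ℕ) (hm : m < d) : ∃ r, r < d ∧ (x + r) % d = m :=
  ⟨(m + (d - x % d)) % d, Nat.mod_lt _ (by omega), shift_mod d x m hm⟩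

lemma uniq_count (d x m : ℕ) (hm : m < d) :
    (Finset.univ.filter fun j : Fin d => (x + (j : ℕ)) % d = m).card = 1 := by
  have hd : 0 < d := by omega
  rw [Finset.card_eq_one]
  refine ⟨⟨(m + (d - x % d)) % d, Nat.mod_lt _ hd⟩, ?_⟩
  ext j
  simp only [Finset.mem_filter, Finset.mem_univ, true_and, Finset.mem_singleton]
  constructor
  · intro hj
    have h2 := shift_mod d x m hm
    have hcan : (j : ℕ) ≡ (m + (d - x % d)) % d [MOD d] :=
      Nat.ModEq.add_left_cancel' x (hj.trans h2.symm)
    have h3 : (j : ℕ) % d = ((m + (d - x % d)) % d) % d := hcan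
    rw [Nat.mod_eq_of_lt j.isLt, Nat.mod_eq_of_lt (Nat.mod_lt _ hd)] at h3
    exact Fin.ext h3
  · rintro rfl
    exact shift_mod d x m hm

def rho (k i : ℕ) : ℕ := if i < k then i else i - k

def sig (k j r : ℕ) : ℕ := if r < k - 2 then (r + j) % (k - 2) else r

lemma rho_lt (k l i : ℕ) (hl : 2 * l < k) (hi : i < 2 * k - 2 * l) : rho k i < k := by
  unfold rho; split <;> omega

lemma sig_lt (k j r : ℕ) (hk : 3 ≤ k) (hr : r < k) : sig k j r < k := by
  unfold sig; split
  · have := Nat.mod_lt (r + j) (y := k - 2) (by omega); omega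
  · exact hr

def f1 (k l : ℕ) (hk : 3 ≤ k) (hl : 2 * l < k) (j : ℕ) (i : Fin (2 * k - 2 * l)) : Fin k :=
  ⟨sig k j (rho k (i : ℕ)), sig_lt k j _ hk (rho_lt k l _ hl i.isLt)⟩

def f2 (k l : ℕ) (hk : 0 < k) (j : ℕ) (i : Fin (2 * k - 2 * l)) : Fin k :=
  ⟨((i : ℕ) + j) % k, Nat.mod_lt _ hk⟩

lemma f2_surj1 (k l : ℕ) (hk : 0 < k) (hl : 2 * l < k) (j : ℕ) :
    (cherryEdge1 k l).image (f2 k l hk j) = Finset.univ := by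
  apply Finset.eq_univ_of_forall
  intro m
  obtain ⟨r, hr, hrm⟩ := exists_shift k j (m : ℕ) m.isLt
  refine Finset.mem_image.2 ⟨⟨r, by omega⟩, ?_, ?_⟩
  · simp only [cherryEdge1, Finset.mem_filter, Finset.mem_univ, true_and]; omega
  · apply Fin.ext; show (r + j) % k = (m : ℕ); rw [Nat.add_comm]; exact hrm

lemma f2_surj2 (k l : ℕ) (hk : 0 < k) (hl : 2 * l < k) (j : ℕ) :
    (cherryEdge2 k l).image (f2 k l hk j) = Finset.univ := by
  apply Finset.eq_univ_of_forall
  intro m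
  obtain ⟨r, hr, hrm⟩ := exists_shift k (j + (k - 2 * l)) (m : ℕ) m.isLt
  refine Finset.mem_image.2 ⟨⟨k - 2 * l + r, by omega⟩, ?_, ?_⟩
  · simp only [cherryEdge2, Finset.mem_filter, Finset.mem_univ, true_and]; omega
  · apply Fin.ext
    show (k - 2 * l + r + j) % k = (m : ℕ)
    rw [show k - 2 * l + r + j = j + (k - 2 * l) + r by omega]
    exact hrm

lemma f1_surj1 (k l : ℕ) (hk : 3 ≤ k) (hl : 2 * l < k) (j : ℕ) :
    (cherryEdge1 k l).image (f1 k l hk hl j) = Finset.univ := by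
  apply Finset.eq_univ_of_forall
  intro m
  by_cases hm : (m : ℕ) < k - 2
  · obtain ⟨r, hr, hrm⟩ := exists_shift (k - 2) j (m : ℕ) hm
    refine Finset.mem_image.2 ⟨⟨r, by omega⟩, ?_, ?_⟩
    · simp only [cherryEdge1, Finset.mem_filter, Finset.mem_univ, true_and]; omega
    · apply Fin.ext
      show sig k j (rho k r) = (m : ℕ)
      rw [show rho k r = r by unfold rho; split <;> omega]
      unfold sig
      rw [if_pos hr, Nat.add_comm]
      exact hrm
  · refine Finset.mem_image.2 ⟨⟨(m : ℕ), by omega⟩, ?_, ?_⟩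
    · simp only [cherryEdge1, Finset.mem_filter, Finset.mem_univ, true_and]; omega
    · apply Fin.ext
      show sig k j (rho k (m : ℕ)) = (m : ℕ)
      rw [show rho k (m : ℕ) = (m : ℕ) by unfold rho; split <;> omega]
      unfold sig
      rw [if_neg (by omega)]

lemma f1_surj2 (k l : ℕ) (hk : 3 ≤ k) (hl1 : 1 ≤ l) (hl : 2 * l < k) (j : ℕ) :
    (cherryEdge2 k l).image (f1 k l hk hl j) = Finset.univ := by
  apply Finset.eq_univ_of_forall
  intro m
  by_cases hm : (m : ℕ) < k - 2
  · obtain ⟨r, hr, hrm⟩ := exists_shift (k - 2) j (m : ℕ) hm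
    by_cases hr2 : r < k - 2 * l
    · refine Finset.mem_image.2 ⟨⟨r + k, by omega⟩, ?_, ?_⟩
      · simp only [cherryEdge2, Finset.mem_filter, Finset.mem_univ, true_and]; omega
      · apply Fin.ext
        show sig k j (rho k (r + k)) = (m : ℕ)
        rw [show rho k (r + k) = r by unfold rho; split <;> omega]
        unfold sig
        rw [if_pos hr, Nat.add_comm]
        exact hrm
    · refine Finset.mem_image.2 ⟨⟨r, by omega⟩, ?_, ?_⟩
      · simp only [cherryEdge2, Finset.mem_filter, Finset.mem_univ, true_and]; omega
      · apply Fin.ext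
        show sig k j (rho k r) = (m : ℕ)
        rw [show rho k r = r by unfold rho; split <;> omega]
        unfold sig
        rw [if_pos hr, Nat.add_comm]
        exact hrm
  · refine Finset.mem_image.2 ⟨⟨(m : ℕ), by omega⟩, ?_, ?_⟩
    · simp only [cherryEdge2, Finset.mem_filter, Finset.mem_univ, true_and]; omega
    · apply Fin.ext
      show sig k j (rho k (m : ℕ)) = (m : ℕ)
      rw [show rho k (m : ℕ) = (m : ℕ) by unfold rho; split <;> omega]
      unfold sig
      rw [if_neg (by omega)]
lemma count2 (k l : ℕ) (hk : 0 < k) (hl : 2 * l < k) (m : Fin k) :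
    ∑ j : Fin k, (Finset.univ.filter fun i : Fin (2 * k - 2 * l) => f2 k l hk (j : ℕ) i = m).card
      = 2 * k - 2 * l := by
  have hcond : ∀ (j : ℕ) (i : Fin (2 * k - 2 * l)),
      (f2 k l hk j i = m) = (((i : ℕ) + j) % k = (m : ℕ)) := by
    intro j i
    simp [f2, Fin.ext_iff]
  simp_rw [hcond, Finset.card_filter]
  rw [Finset.sum_comm]
  have step : ∀ i : Fin (2 * k - 2 * l),
      (∑ j : Fin k, if ((i : ℕ) + (j : ℕ)) % k = (m : ℕ) then 1 else 0) = 1 := by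
    intro i
    rw [← Finset.card_filter]
    exact uniq_count k (i : ℕ) (m : ℕ) m.isLt
  rw [Finset.sum_congr rfl fun i _ => step i]
  simp

lemma count1_hi (k l : ℕ) (hk : 3 ≤ k) (hl1 : 1 ≤ l) (hl : 2 * l < k) (m : Fin k)
    (hm1 : k - 2 ≤ (m : ℕ)) :
    ∑ j : Fin (k - 2),
      (Finset.univ.filter fun i : Fin (2 * k - 2 * l) => f1 k l hk hl (j : ℕ) i = m).card
      = k - 2 := by
  have hcond : ∀ (j : ℕ) (i : Fin (2 * k - 2 * l)),
      (f1 k l hk hl j i = m) = (sig k j (rho k (i : ℕ)) = (m : ℕ)) := by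
    intro j i
    simp [f1, Fin.ext_iff]
  simp_rw [hcond, Finset.card_filter]
  rw [Finset.sum_comm]
  have step : ∀ i : Fin (2 * k - 2 * l),
      (∑ j : Fin (k - 2), if sig k (j : ℕ) (rho k (i : ℕ)) = (m : ℕ) then 1 else 0)
        = if (i : ℕ) = (m : ℕ) then k - 2 else 0 := by
    intro i
    have hi := i.isLt
    by_cases him : (i : ℕ) = (m : ℕ)
    · have hr : rho k (i : ℕ) = (m : ℕ) := by unfold rho; split <;> omega
      have hs : ∀ j : ℕ, sig k j (rho k (i : ℕ)) = (m : ℕ) := by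
        intro j; rw [hr]; unfold sig; rw [if_neg (by omega)]
      rw [if_pos him]
      have hone : ∀ j : Fin (k - 2),
          (if sig k (j : ℕ) (rho k (i : ℕ)) = (m : ℕ) then 1 else 0) = 1 := fun j => if_pos (hs (j : ℕ))
      rw [Finset.sum_congr rfl fun j _ => hone j]
      simp
    · rw [if_neg him]
      apply Finset.sum_eq_zero
      intro j _
      rw [if_neg]
      unfold sig
      split
      · have := Nat.mod_lt (rho k (i : ℕ) + (j : ℕ)) (y := k - 2) (by omega); omega
      · unfold rho; split <;> omega
  rw [Finset.sum_congr rfl fun i _ => step i]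
  have hmem : ∀ i : Fin (2 * k - 2 * l), ((i : ℕ) = (m : ℕ)) = (i = ⟨(m : ℕ), by omega⟩) := by
    intro i; rw [Fin.ext_iff]
  simp_rw [hmem]
  rw [Finset.sum_ite_eq']
  simp

lemma count1_lo (k l : ℕ) (hk : 3 ≤ k) (hl1 : 1 ≤ l) (hl : 2 * l < k) (m : Fin k)
    (hm : (m : ℕ) < k - 2) :
    ∑ j : Fin (k - 2),
      (Finset.univ.filter fun i : Fin (2 * k - 2 * l) => f1 k l hk hl (j : ℕ) i = m).card
      = 2 * k - 2 * l - 2 := by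
  have hcond : ∀ (j : ℕ) (i : Fin (2 * k - 2 * l)),
      (f1 k l hk hl j i = m) = (sig k j (rho k (i : ℕ)) = (m : ℕ)) := by
    intro j i
    simp [f1, Fin.ext_iff]
  simp_rw [hcond, Finset.card_filter]
  rw [Finset.sum_comm]
  have step : ∀ i : Fin (2 * k - 2 * l),
      (∑ j : Fin (k - 2), if sig k (j : ℕ) (rho k (i : ℕ)) = (m : ℕ) then 1 else 0)
        = if rho k (i : ℕ) < k - 2 then 1 else 0 := by
    intro i
    by_cases hr : rho k (i : ℕ) < k - 2
    · rw [if_pos hr]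
      have hs : ∀ j : ℕ, (sig k j (rho k (i : ℕ)) = (m : ℕ)) = ((rho k (i : ℕ) + j) % (k - 2) = (m : ℕ)) := by
        intro j; unfold sig; rw [if_pos hr]
      simp_rw [hs]
      rw [← Finset.card_filter]
      exact uniq_count (k - 2) _ (m : ℕ) hm
    · rw [if_neg hr]
      apply Finset.sum_eq_zero
      intro j _
      rw [if_neg]
      unfold sig
      rw [if_neg hr]
      omega
  rw [Finset.sum_congr rfl fun i _ => step i]
  rw [← Finset.card_filter]
  have hset : (Finset.univ.filter fun i : Fin (2 * k - 2 * l) => rho k (i : ℕ) < k - 2)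
      = Finset.univ \ {⟨k - 2, by omega⟩, ⟨k - 1, by omega⟩} := by
    ext i
    have hi := i.isLt
    simp only [Finset.mem_filter, Finset.mem_univ, true_and, Finset.mem_sdiff,
      Finset.mem_insert, Finset.mem_singleton, Fin.ext_iff]
    unfold rho
    split <;> omega
  rw [hset, Finset.card_sdiff_of_subset (Finset.subset_univ _), Finset.card_univ]
  rw [Finset.card_insert_of_notMem (by simp [Fin.ext_iff]; omega), Finset.card_singleton]
  simp
lemma weightAt_sum (k l t N : ℕ) (β : ℝ) (ψ : Fin N → (Fin (2 * k - 2 * l) → Fin t)) (w : Fin t) :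
    weightAt k l (fun φ => ((Finset.univ.filter fun j : Fin N => ψ j = φ).card : ℝ) * β) w
      = ∑ j : Fin N, ((Finset.univ.filter fun u => ψ j u = w).card : ℝ) * β := by
  unfold weightAt
  have key : ∀ φ : Fin (2 * k - 2 * l) → Fin t,
      ((Finset.univ.filter fun j : Fin N => ψ j = φ).card : ℝ)
        = ∑ j : Fin N, if ψ j = φ then (1 : ℝ) else 0 := by
    intro φ
    rw [Finset.card_filter]
    push_cast
    rfl
  simp_rw [key, Finset.sum_mul, Finset.mul_sum, ite_mul, one_mul, zero_mul, mul_ite, mul_zero]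
  rw [Finset.sum_comm]
  refine Finset.sum_congr rfl fun j _ => ?_
  rw [Finset.sum_ite_eq]
  simp

lemma cnt_image (k l t : ℕ) (v : Fin k → Fin t) (hv : Function.Injective v)
    (g : Fin (2 * k - 2 * l) → Fin k) (m : Fin k) :
    (Finset.univ.filter fun u => v (g u) = v m).card
      = (Finset.univ.filter fun u => g u = m).card := by
  congr 1
  apply Finset.filter_congr
  intro u _
  simp [hv.eq_iff]

lemma cnt_out (k l t : ℕ) (v : Fin k → Fin t) (g : Fin (2 * k - 2 * l) → Fin k) (w : Fin t)
    (hw : w ∉ Finset.univ.image v) :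
    (Finset.univ.filter fun u => v (g u) = w).card = 0 := by
  rw [Finset.card_eq_zero, Finset.filter_eq_empty_iff]
  intro u _
  intro hc
  exact hw (hc ▸ Finset.mem_image_of_mem v (Finset.mem_univ (g u)))

lemma hfun_props (k l t N : ℕ) (β : ℝ) (ER : Finset (Finset (Fin t)))
    (v : Fin k → Fin t) (he : Finset.univ.image v ∈ ER)
    (f : ℕ → Fin (2 * k - 2 * l) → Fin k)
    (hs1 : ∀ j : Fin N, (cherryEdge1 k l).image (f (j : ℕ)) = Finset.univ)
    (hs2 : ∀ j : Fin N, (cherryEdge2 k l).image (f (j : ℕ)) = Finset.univ) :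
    ∀ φ, ((Finset.univ.filter fun j : Fin N => (fun i => v (f (j : ℕ) i)) = φ).card : ℝ) * β ≠ 0 →
      (IsCherryHom k l ER φ ∧ ∃ a : ℕ, 0 < a ∧
        ((Finset.univ.filter fun j : Fin N => (fun i => v (f (j : ℕ) i)) = φ).card : ℝ) * β
          = (a : ℝ) * β) ∧
      ∀ u, φ u ∈ Finset.univ.image v := by
  intro φ hφ
  have hcard : (Finset.univ.filter fun j : Fin N => (fun i => v (f (j : ℕ) i)) = φ).card ≠ 0 := by
    intro h0
    apply hφ
    rw [h0]
    simp
  obtain ⟨j, hj⟩ := Finset.card_pos.mp (Nat.pos_of_ne_zero hcard)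
  have hj' : (fun i => v (f (j : ℕ) i)) = φ := (Finset.mem_filter.1 hj).2
  subst hj'
  refine ⟨⟨⟨?_, ?_⟩, ⟨_, Nat.pos_of_ne_zero hcard, rfl⟩⟩, fun u => ?_⟩
  · rw [show (fun i => v (f (j : ℕ) i)) = v ∘ f (j : ℕ) from rfl, ← Finset.image_image, hs1 j]
    exact he
  · rw [show (fun i => v (f (j : ℕ) i)) = v ∘ f (j : ℕ) from rfl, ← Finset.image_image, hs2 j]
    exact he
  · exact Finset.mem_image_of_mem v (Finset.mem_univ _)
lemma tiling1 (k l t : ℕ) (hk : 3 ≤ k) (hl1 : 1 ≤ l) (hl2 : 2 * l < k)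
    (ER : Finset (Finset (Fin t)))
    (v : Fin k → Fin t) (hv : Function.Injective v)
    (he : Finset.univ.image v ∈ ER)
    (q : ℝ) (hq0 : 0 < q) (hq1 : q ≤ 1) :
    ∃ h : (Fin (2 * k - 2 * l) → Fin t) → ℝ,
      ((∀ φ, h φ ≠ 0 → IsCherryHom k l ER φ ∧
          ∃ a : ℕ, 0 < a ∧ h φ = (a : ℝ) * (q / (2 * ((k : ℝ) - l - 1)))) ∧
        ∀ w, weightAt k l h w ≤ 1) ∧
      (∀ φ, h φ ≠ 0 → ∀ u, φ u ∈ Finset.univ.image v) ∧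
      (∀ i : Fin k, (i : ℕ) < k - 2 → weightAt k l h (v i) = q) ∧
      (∀ i : Fin k, k - 2 ≤ (i : ℕ) →
        weightAt k l h (v i) = q * ((k : ℝ) - 2) / (2 * ((k : ℝ) - l - 1))) := by
  have hk3 : (3 : ℝ) ≤ (k : ℝ) := by exact_mod_cast hk
  have hl1r : (1 : ℝ) ≤ (l : ℝ) := by exact_mod_cast hl1
  have h2l : 2 * (l : ℝ) < (k : ℝ) := by exact_mod_cast hl2
  have hD1 : (0 : ℝ) < 2 * ((k : ℝ) - l - 1) := by
    have : (l : ℝ) + 1 < k := by exact_mod_cast (show l + 1 < k by omega)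
    linarith
  have hcast_k2 : ((k - 2 : ℕ) : ℝ) = (k : ℝ) - 2 := by
    have := congrArg (Nat.cast (R := ℝ)) (show (k - 2) + 2 = k by omega)
    push_cast at this
    linarith
  have hcast_n2 : ((2 * k - 2 * l - 2 : ℕ) : ℝ) = 2 * ((k : ℝ) - l - 1) := by
    have := congrArg (Nat.cast (R := ℝ)) (show (2 * k - 2 * l - 2) + (2 * l + 2) = 2 * k by omega)
    push_cast at this
    linarith
  have wmain : ∀ m : Fin k,
      weightAt k l (fun φ => ((Finset.univ.filter fun j : Fin (k - 2) =>
          (fun i => v (f1 k l hk hl2 (j : ℕ) i)) = φ).card : ℝ) * (q / (2 * ((k : ℝ) - l - 1))))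
        (v m)
      = ((∑ j : Fin (k - 2),
          (Finset.univ.filter fun u => f1 k l hk hl2 (j : ℕ) u = m).card : ℕ) : ℝ)
        * (q / (2 * ((k : ℝ) - l - 1))) := by
    intro m
    rw [weightAt_sum k l t (k - 2) (q / (2 * ((k : ℝ) - l - 1)))
      (fun j => fun i => v (f1 k l hk hl2 (j : ℕ) i)) (v m)]
    rw [Nat.cast_sum, Finset.sum_mul]
    refine Finset.sum_congr rfl fun j _ => ?_
    rw [cnt_image k l t v hv (f1 k l hk hl2 (j : ℕ)) m]
  have wlo : ∀ m : Fin k, (m : ℕ) < k - 2 →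
      weightAt k l (fun φ => ((Finset.univ.filter fun j : Fin (k - 2) =>
          (fun i => v (f1 k l hk hl2 (j : ℕ) i)) = φ).card : ℝ) * (q / (2 * ((k : ℝ) - l - 1))))
        (v m) = q := by
    intro m hm
    rw [wmain m, count1_lo k l hk hl1 hl2 m hm, hcast_n2, mul_comm,
      div_mul_cancel₀ q (ne_of_gt hD1)]
  have whi : ∀ m : Fin k, k - 2 ≤ (m : ℕ) →
      weightAt k l (fun φ => ((Finset.univ.filter fun j : Fin (k - 2) =>
          (fun i => v (f1 k l hk hl2 (j : ℕ) i)) = φ).card : ℝ) * (q / (2 * ((k : ℝ) - l - 1))))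
        (v m) = q * ((k : ℝ) - 2) / (2 * ((k : ℝ) - l - 1)) := by
    intro m hm
    rw [wmain m, count1_hi k l hk hl1 hl2 m hm, hcast_k2]
    ring
  have wout : ∀ w : Fin t, w ∉ Finset.univ.image v →
      weightAt k l (fun φ => ((Finset.univ.filter fun j : Fin (k - 2) =>
          (fun i => v (f1 k l hk hl2 (j : ℕ) i)) = φ).card : ℝ) * (q / (2 * ((k : ℝ) - l - 1))))
        w = 0 := by
    intro w hw
    rw [weightAt_sum k l t (k - 2) (q / (2 * ((k : ℝ) - l - 1)))
      (fun j => fun i => v (f1 k l hk hl2 (j : ℕ) i)) w]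
    apply Finset.sum_eq_zero
    intro j _
    rw [cnt_out k l t v (f1 k l hk hl2 (j : ℕ)) w hw]
    simp
  have hprops := hfun_props k l t (k - 2) (q / (2 * ((k : ℝ) - l - 1))) ER v he
    (f1 k l hk hl2) (fun j => f1_surj1 k l hk hl2 (j : ℕ))
    (fun j => f1_surj2 k l hk hl1 hl2 (j : ℕ))
  refine ⟨fun φ => ((Finset.univ.filter fun j : Fin (k - 2) =>
      (fun i => v (f1 k l hk hl2 (j : ℕ) i)) = φ).card : ℝ) * (q / (2 * ((k : ℝ) - l - 1))),
    ⟨fun φ hφ => (hprops φ hφ).1, ?_⟩, fun φ hφ => (hprops φ hφ).2, wlo, whi⟩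
  intro w
  by_cases hw : w ∈ Finset.univ.image v
  · obtain ⟨m, -, rfl⟩ := Finset.mem_image.1 hw
    by_cases hm : (m : ℕ) < k - 2
    · rw [wlo m hm]; exact hq1
    · rw [whi m (by omega)]
      rw [div_le_one hD1]
      nlinarith [mul_nonneg (by linarith : (0 : ℝ) ≤ 1 - q) (by linarith : (0 : ℝ) ≤ (k : ℝ) - 2)]
  · rw [wout w hw]
    exact zero_le_one

lemma tiling2 (k l t : ℕ) (hk : 3 ≤ k) (hl1 : 1 ≤ l) (hl2 : 2 * l < k)
    (ER : Finset (Finset (Fin t)))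
    (v : Fin k → Fin t) (hv : Function.Injective v)
    (he : Finset.univ.image v ∈ ER)
    (q : ℝ) (hq0 : 0 < q) (hq1 : q ≤ 1) :
    ∃ h : (Fin (2 * k - 2 * l) → Fin t) → ℝ,
      ((∀ φ, h φ ≠ 0 → IsCherryHom k l ER φ ∧
          ∃ a : ℕ, 0 < a ∧ h φ = (a : ℝ) * (q / (2 * ((k : ℝ) - l)))) ∧
        ∀ w, weightAt k l h w ≤ 1) ∧
      (∀ φ, h φ ≠ 0 → ∀ u, φ u ∈ Finset.univ.image v) ∧
      (∀ i : Fin k, weightAt k l h (v i) = q) := by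
  have hk0 : 0 < k := by omega
  have hD2 : (0 : ℝ) < 2 * ((k : ℝ) - l) := by
    have : (l : ℝ) < k := by exact_mod_cast (show l < k by omega)
    linarith
  have hcast_n : ((2 * k - 2 * l : ℕ) : ℝ) = 2 * ((k : ℝ) - l) := by
    have := congrArg (Nat.cast (R := ℝ)) (show (2 * k - 2 * l) + 2 * l = 2 * k by omega)
    push_cast at this
    linarith
  have wall : ∀ m : Fin k,
      weightAt k l (fun φ => ((Finset.univ.filter fun j : Fin k =>
          (fun i => v (f2 k l hk0 (j : ℕ) i)) = φ).card : ℝ) * (q / (2 * ((k : ℝ) - l))))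
        (v m) = q := by
    intro m
    rw [weightAt_sum k l t k (q / (2 * ((k : ℝ) - l)))
      (fun j => fun i => v (f2 k l hk0 (j : ℕ) i)) (v m)]
    have : ∀ j : Fin k, ((Finset.univ.filter fun u => v (f2 k l hk0 (j : ℕ) u) = v m).card : ℝ)
        = ((Finset.univ.filter fun u => f2 k l hk0 (j : ℕ) u = m).card : ℝ) := by
      intro j
      rw [cnt_image k l t v hv (f2 k l hk0 (j : ℕ)) m]
    rw [Finset.sum_congr rfl fun j _ => by rw [this j]]
    rw [← Finset.sum_mul, ← Nat.cast_sum, count2 k l hk0 hl2 m, hcast_n, mul_comm,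
      div_mul_cancel₀ q (ne_of_gt hD2)]
  have wout : ∀ w : Fin t, w ∉ Finset.univ.image v →
      weightAt k l (fun φ => ((Finset.univ.filter fun j : Fin k =>
          (fun i => v (f2 k l hk0 (j : ℕ) i)) = φ).card : ℝ) * (q / (2 * ((k : ℝ) - l))))
        w = 0 := by
    intro w hw
    rw [weightAt_sum k l t k (q / (2 * ((k : ℝ) - l)))
      (fun j => fun i => v (f2 k l hk0 (j : ℕ) i)) w]
    apply Finset.sum_eq_zero
    intro j _
    rw [cnt_out k l t v (f2 k l hk0 (j : ℕ)) w hw]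
    simp
  have hprops := hfun_props k l t k (q / (2 * ((k : ℝ) - l))) ER v he
    (f2 k l hk0) (fun j => f2_surj1 k l hk0 hl2 (j : ℕ))
    (fun j => f2_surj2 k l hk0 hl2 (j : ℕ))
  refine ⟨fun φ => ((Finset.univ.filter fun j : Fin k =>
      (fun i => v (f2 k l hk0 (j : ℕ) i)) = φ).card : ℝ) * (q / (2 * ((k : ℝ) - l))),
    ⟨fun φ hφ => (hprops φ hφ).1, ?_⟩, fun φ hφ => (hprops φ hφ).2, wall⟩
  intro w
  by_cases hw : w ∈ Finset.univ.image v
  · obtain ⟨m, -, rfl⟩ := Finset.mem_image.1 hw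
    rw [wall m]; exact hq1
  · rw [wout w hw]
    exact zero_le_one

theorem stmt8 (k l t : ℕ) (hk : 3 ≤ k) (hl1 : 1 ≤ l) (hl2 : 2 * l < k)
    (ER : Finset (Finset (Fin t))) (hunif : ∀ e ∈ ER, e.card = k)
    (v : Fin k → Fin t) (hv : Function.Injective v)
    (he : Finset.univ.image v ∈ ER)
    (q : ℝ) (hq0 : 0 < q) (hq1 : q ≤ 1) :
    (∃ h : (Fin (2 * k - 2 * l) → Fin t) → ℝ,
      IsHomTiling k l (q / (2 * ((k : ℝ) - l - 1))) ER h ∧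
      (∀ φ, h φ ≠ 0 → ∀ u, φ u ∈ Finset.univ.image v) ∧
      (∀ i : Fin k, (i : ℕ) < k - 2 → weightAt k l h (v i) = q) ∧
      (∀ i : Fin k, k - 2 ≤ (i : ℕ) →
        weightAt k l h (v i) = q * ((k : ℝ) - 2) / (2 * ((k : ℝ) - l - 1)))) ∧
    (∃ h' : (Fin (2 * k - 2 * l) → Fin t) → ℝ,
      IsHomTiling k l (q / (2 * ((k : ℝ) - l))) ER h' ∧
      (∀ φ, h' φ ≠ 0 → ∀ u, φ u ∈ Finset.univ.image v) ∧
      (∀ i : Fin k, weightAt k l h' (v i) = q)) := by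
  refine ⟨?_, ?_⟩
  · obtain ⟨h, hA, hB, hC, hD⟩ := tiling1 k l t hk hl1 hl2 ER v hv he q hq0 hq1
    exact ⟨h, hA, hB, hC, hD⟩
  · obtain ⟨h, hA, hB, hC⟩ := tiling2 k l t hk hl1 hl2 ER v hv he q hq0 hq1
    exact ⟨h, hA, hB, hC⟩
end

section
/- Let k ≥ 3 and 1 ≤ ℓ < k/2 be integers and let n be divisible by k−ℓ. Let H_{k,ℓ} = (V,E) be the k-uniform hypergraph on n vertices whose edge set E consists of all k-element subsets of V having at least one vertex in a fixed set A ⊆ V with |A| = ⌈n/(2(k−ℓ)) − 1⌉. Then H_{k,ℓ} does not contain a Hamiltonian ℓ-cycle, and δ_{k−1}(H_{k,ℓ}) = ⌈n/(2(k−ℓ)) − 1⌉. -/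
open Finset

/-- Number of edges of the hypergraph `E` containing the vertex set `S`. -/
def degH {n : ℕ} (E : Finset (Finset (Fin n))) (S : Finset (Fin n)) : ℕ :=
  (E.filter fun e => S ⊆ e).card

/-- The minimum `s`-degree of the hypergraph `E`: the least degree of an `s`-element
vertex set. -/
noncomputable def minDeg {n : ℕ} (s : ℕ) (E : Finset (Finset (Fin n))) : ℕ :=
  sInf {d : ℕ | ∃ S : Finset (Fin n), S.card = s ∧ degH E S = d}

/-- `E` contains a Hamiltonian ℓ-cycle. -/
def HasHamCycle {n : ℕ} (k l : ℕ) (E : Finset (Finset (Fin n))) : Prop :=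
  ∃ vs : List (Fin n), vs.Nodup ∧ (∀ v, v ∈ vs) ∧ 1 ≤ vs.length / (k - l) ∧
    ∀ i < vs.length / (k - l), ((vs.rotate (i * (k - l))).take k).toFinset ∈ E

/-- Separation of distinct elements of a common congruence class. -/
lemma pair_sep {d x y : ℤ} (hdvd : d ∣ x - y) (hne : x ≠ y) :
    d ≤ x - y ∨ d ≤ y - x := by
  have h := Int.le_of_dvd (abs_pos.2 (sub_ne_zero.2 hne)) ((dvd_abs _ _).2 hdvd)
  rcases le_abs.1 h with h | h
  · exact Or.inl h
  · right; omega

/-- The key numeric estimate: twice the size of `A` times `k-l` is less than `n`. -/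
lemma aux_card_lt {k l n : ℕ} (hk : 3 ≤ k) (hl1 : 1 ≤ l) (hl2 : 2 * l < k) (hn0 : 0 < n) :
    2 * ⌈(n : ℝ) / (2 * ((k : ℝ) - l)) - 1⌉₊ * (k - l) < n := by
  have hlk : l < k := by omega
  have hc : ((k - l : ℕ) : ℝ) = (k : ℝ) - l := by
    push_cast [Nat.cast_sub hlk.le]; ring
  have hcpos : (0 : ℝ) < ((k - l : ℕ) : ℝ) := by
    exact_mod_cast Nat.cast_pos.2 (by omega : 0 < k - l)
  have hcpos' : (0 : ℝ) < 2 * ((k : ℝ) - l) := by rw [← hc]; positivity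
  have hfrac : (0 : ℝ) < (n : ℝ) / (2 * ((k : ℝ) - l)) := by
    apply div_pos _ hcpos'
    exact_mod_cast hn0
  have hceil : (⌈(n : ℝ) / (2 * ((k : ℝ) - l)) - 1⌉₊ : ℝ) < (n : ℝ) / (2 * ((k : ℝ) - l)) := by
    rcases le_or_gt 0 ((n : ℝ) / (2 * ((k : ℝ) - l)) - 1) with h | h
    · have := Nat.ceil_lt_add_one h
      linarith
    · rw [Nat.ceil_eq_zero.mpr h.le]
      simpa using hfrac
  have h2 : (⌈(n : ℝ) / (2 * ((k : ℝ) - l)) - 1⌉₊ : ℝ) * (2 * ((k : ℝ) - l)) < n :=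
    (lt_div_iff₀ hcpos').1 hceil
  have final : ((2 * ⌈(n : ℝ) / (2 * ((k : ℝ) - l)) - 1⌉₊ * (k - l) : ℕ) : ℝ) < (n : ℝ) := by
    push_cast [Nat.cast_sub hlk.le]
    nlinarith [h2]
  exact_mod_cast final

theorem stmt11 (k l : ℕ) (hk : 3 ≤ k) (hl1 : 1 ≤ l) (hl2 : 2 * l < k)
    (n : ℕ) (hn : (k - l) ∣ n)
    (A : Finset (Fin n)) (hA : A.card = ⌈(n : ℝ) / (2 * ((k : ℝ) - l)) - 1⌉₊)
    (E : Finset (Finset (Fin n)))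
    (hE : E = (Finset.univ.powersetCard k).filter fun e => ∃ a ∈ A, a ∈ e) :
    ¬ HasHamCycle k l E ∧
      minDeg (k - 1) E = ⌈(n : ℝ) / (2 * ((k : ℝ) - l)) - 1⌉₊ := by
  have hlk : l < k := by omega
  have hd1 : 1 ≤ k - l := by omega
  have hk2d : k < 2 * (k - l) := by omega
  rw [← hA]
  constructor
  · -- No Hamiltonian ℓ-cycle.
    rintro ⟨vs, hnd, hall, hlen, hedge⟩
    have hvslen : vs.length = n := by
      have h1 : vs.toFinset = Finset.univ := by
        ext v; simp [hall v]
      have h2 := List.toFinset_card_of_nodup hnd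
      rw [h1] at h2
      simpa using h2.symm
    rw [hvslen] at hlen hedge
    have hn0 : 0 < n := by
      by_contra h
      push_neg at h
      interval_cases n
      simp at hlen
    have hMlt : 2 * A.card * (k - l) < n := by
      rw [hA]; exact aux_card_lt hk hl1 hl2 hn0
    -- facts about edges
    have hecard : ∀ i < n / (k - l),
        (((vs.rotate (i * (k - l))).take k).toFinset).card = k ∧
          ∃ a ∈ A, a ∈ ((vs.rotate (i * (k - l))).take k).toFinset := by
      intro i hi
      have := hedge i hi
      rw [hE, Finset.mem_filter, Finset.mem_powersetCard_univ] at this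
      exact ⟨this.1, this.2⟩
    have hnodup_take : ∀ r : ℕ, ((vs.rotate r).take k).Nodup := fun r =>
      (List.take_sublist k (vs.rotate r)).nodup (List.nodup_rotate.2 hnd)
    have hkn : k ≤ n := by
      have h := (hecard 0 (by omega)).1
      rw [List.toFinset_card_of_nodup (hnodup_take _), List.length_take,
        List.length_rotate, hvslen] at h
      omega
    -- choose a vertex of A in each edge
    have hch : ∀ i : ℕ, ∃ a : Fin n, i < n / (k - l) →
        a ∈ A ∧ a ∈ ((vs.rotate (i * (k - l))).take k).toFinset := by
      intro i
      by_cases h : i < n / (k - l)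
      · obtain ⟨a, ha1, ha2⟩ := (hecard i h).2
        exact ⟨a, fun _ => ⟨ha1, ha2⟩⟩
      · exact ⟨⟨0, hn0⟩, fun hc => absurd hc h⟩
    choose f hf using hch
    -- pigeonhole: some a ∈ A is in at least 3 edges
    have hcard_lt : A.card * 2 < (Finset.range (n / (k - l))).card := by
      rw [Finset.card_range]
      have h1 : (A.card * 2) * (k - l) < (n / (k - l)) * (k - l) := by
        rw [Nat.div_mul_cancel hn]
        calc (A.card * 2) * (k - l) = 2 * A.card * (k - l) := by ring
          _ < n := hMlt
      exact Nat.lt_of_mul_lt_mul_right h1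
    obtain ⟨a, haA, hfib⟩ := Finset.exists_lt_card_fiber_of_mul_lt_card_of_maps_to
      (f := f) (fun i hi => (hf i (Finset.mem_range.1 hi)).1) hcard_lt
    rw [Finset.two_lt_card] at hfib
    obtain ⟨i₁, hi₁, i₂, hi₂, i₃, hi₃, h12, h13, h23⟩ := hfib
    simp only [Finset.mem_filter, Finset.mem_range] at hi₁ hi₂ hi₃
    -- position of a
    have hav : a ∈ vs := hall a
    obtain ⟨p, hp, hpa⟩ := List.getElem_of_mem hav
    -- each edge containing a yields an index equation
    have key : ∀ i : ℕ, i < n / (k - l) → f i = a →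
        ∃ t q : ℕ, t < k ∧ q ≤ 1 ∧ i * (k - l) + t = n * q + p := by
      intro i hi hfa
      have ha2 := (hf i hi).2
      rw [hfa, List.mem_toFinset] at ha2
      obtain ⟨t, ht, hgt⟩ := List.getElem_of_mem ha2
      have ht' : t < k := by
        rw [List.length_take, List.length_rotate] at ht
        omega
      rw [List.getElem_take, List.getElem_rotate] at hgt
      have hmod : (t + i * (k - l)) % n = p := by
        have h := (List.Nodup.getElem_inj_iff hnd).1 (hgt.trans hpa.symm)
        rw [hvslen] at h
        exact h
      have hq := Nat.div_add_mod (t + i * (k - l)) n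
      rw [hmod] at hq
      refine ⟨t, (t + i * (k - l)) / n, ht', ?_, by omega⟩
      -- q ≤ 1 since t + i*(k-l) < 2n
      have hib : (i + 1) * (k - l) ≤ (n / (k - l)) * (k - l) :=
        Nat.mul_le_mul_right _ (by omega)
      rw [Nat.div_mul_cancel hn] at hib
      have hib' : (i + 1) * (k - l) = i * (k - l) + (k - l) := by ring
      have hlt2 : t + i * (k - l) < 2 * n := by omega
      have hqlt : (t + i * (k - l)) / n < 2 := Nat.div_lt_of_lt_mul (by omega)
      omega
    obtain ⟨t₁, q₁, ht₁, hq₁, he₁⟩ := key i₁ hi₁.1 hi₁.2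
    obtain ⟨t₂, q₂, ht₂, hq₂, he₂⟩ := key i₂ hi₂.1 hi₂.2
    obtain ⟨t₃, q₃, ht₃, hq₃, he₃⟩ := key i₃ hi₃.1 hi₃.2
    -- bounds on the multiples
    have hbound : ∀ i : ℕ, i < n / (k - l) → i * (k - l) ≤ n - (k - l) := by
      intro i hi
      have hib : (i + 1) * (k - l) ≤ (n / (k - l)) * (k - l) :=
        Nat.mul_le_mul_right _ (by omega)
      rw [Nat.div_mul_cancel hn] at hib
      have hib' : (i + 1) * (k - l) = i * (k - l) + (k - l) := by ring
      omega
    have hb₁ := hbound i₁ hi₁.1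
    have hb₂ := hbound i₂ hi₂.1
    have hb₃ := hbound i₃ hi₃.1
    have hX12 : i₁ * (k - l) ≠ i₂ * (k - l) :=
      fun h => h12 (Nat.eq_of_mul_eq_mul_right (by omega) h)
    have hX13 : i₁ * (k - l) ≠ i₃ * (k - l) :=
      fun h => h13 (Nat.eq_of_mul_eq_mul_right (by omega) h)
    have hX23 : i₂ * (k - l) ≠ i₃ * (k - l) :=
      fun h => h23 (Nat.eq_of_mul_eq_mul_right (by omega) h)
    -- pass to ℤ
    have hdvdX : ∀ i : ℕ, ((k - l : ℕ) : ℤ) ∣ ((i * (k - l) : ℕ) : ℤ) := by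
      intro i
      exact_mod_cast Int.natCast_dvd_natCast.2 (dvd_mul_left (k - l) i)
    have hdvdN : ∀ q : ℕ, ((k - l : ℕ) : ℤ) ∣ ((n * q : ℕ) : ℤ) := by
      intro q
      exact_mod_cast Int.natCast_dvd_natCast.2 (hn.mul_right q)
    have hN₁ : n * q₁ = 0 ∨ n * q₁ = n := by
      interval_cases q₁ <;> simp
    have hN₂ : n * q₂ = 0 ∨ n * q₂ = n := by
      interval_cases q₂ <;> simp
    have hN₃ : n * q₃ = 0 ∨ n * q₃ = n := by
      interval_cases q₃ <;> simp
    have hz12 : ((i₁ * (k - l) : ℕ) : ℤ) - ((n * q₁ : ℕ) : ℤ)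
        ≠ ((i₂ * (k - l) : ℕ) : ℤ) - ((n * q₂ : ℕ) : ℤ) := by
      omega
    have hz13 : ((i₁ * (k - l) : ℕ) : ℤ) - ((n * q₁ : ℕ) : ℤ)
        ≠ ((i₃ * (k - l) : ℕ) : ℤ) - ((n * q₃ : ℕ) : ℤ) := by
      omega
    have hz23 : ((i₂ * (k - l) : ℕ) : ℤ) - ((n * q₂ : ℕ) : ℤ)
        ≠ ((i₃ * (k - l) : ℕ) : ℤ) - ((n * q₃ : ℕ) : ℤ) := by
      omega
    have hdvd12 : ((k - l : ℕ) : ℤ) ∣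
        (((i₁ * (k - l) : ℕ) : ℤ) - ((n * q₁ : ℕ) : ℤ))
          - (((i₂ * (k - l) : ℕ) : ℤ) - ((n * q₂ : ℕ) : ℤ)) :=
      dvd_sub (dvd_sub (hdvdX i₁) (hdvdN q₁)) (dvd_sub (hdvdX i₂) (hdvdN q₂))
    have hdvd13 : ((k - l : ℕ) : ℤ) ∣
        (((i₁ * (k - l) : ℕ) : ℤ) - ((n * q₁ : ℕ) : ℤ))
          - (((i₃ * (k - l) : ℕ) : ℤ) - ((n * q₃ : ℕ) : ℤ)) :=
      dvd_sub (dvd_sub (hdvdX i₁) (hdvdN q₁)) (dvd_sub (hdvdX i₃) (hdvdN q₃))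
    have hdvd23 : ((k - l : ℕ) : ℤ) ∣
        (((i₂ * (k - l) : ℕ) : ℤ) - ((n * q₂ : ℕ) : ℤ))
          - (((i₃ * (k - l) : ℕ) : ℤ) - ((n * q₃ : ℕ) : ℤ)) :=
      dvd_sub (dvd_sub (hdvdX i₂) (hdvdN q₂)) (dvd_sub (hdvdX i₃) (hdvdN q₃))
    have hs12 := pair_sep hdvd12 hz12
    have hs13 := pair_sep hdvd13 hz13
    have hs23 := pair_sep hdvd23 hz23
    rcases hs12 with h | h <;> rcases hs13 with h' | h' <;> rcases hs23 with h'' | h'' <;> omega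
  · -- minimum degree
    show minDeg (k - 1) E = A.card
    unfold minDeg
    by_cases hnk : k - 1 ≤ n
    · -- main case
      have hn0 : 0 < n := by omega
      have hMlt : 2 * A.card * (k - l) < n := by
        rw [hA]; exact aux_card_lt hk hl1 hl2 hn0
      have hMn : A.card + (k - 1) ≤ n := by
        rcases Nat.eq_zero_or_pos A.card with h | h
        · omega
        · have h1 : A.card * (k + 1) ≤ A.card * (2 * (k - l)) :=
            Nat.mul_le_mul_left _ (by omega)
          have h2 : 2 * A.card * (k - l) = A.card * (2 * (k - l)) := by ring
          have h3 : k ≤ A.card * k := Nat.le_mul_of_pos_left k h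
          have h4 : A.card * (k + 1) = A.card * k + A.card := by ring
          omega
      -- degree of a set disjoint from A
      have claim1 : ∀ S : Finset (Fin n), S.card = k - 1 → (∀ x ∈ S, x ∉ A) →
          degH E S = A.card := by
        intro S hScard hdisj
        have himg : E.filter (fun e => S ⊆ e) = A.image (fun a => insert a S) := by
          ext e
          simp only [hE, Finset.mem_filter, Finset.mem_powersetCard_univ, Finset.mem_image]
          constructor
          · rintro ⟨⟨hcard, a, haA, hae⟩, hSe⟩
            refine ⟨a, haA, ?_⟩
            have haS : a ∉ S := fun h => hdisj a h haA
            have hsub : insert a S ⊆ e := Finset.insert_subset hae hSe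
            have hcard' : (insert a S).card = k := by
              rw [Finset.card_insert_of_notMem haS, hScard]; omega
            exact Finset.eq_of_subset_of_card_le hsub (by omega)
          · rintro ⟨a, haA, rfl⟩
            have haS : a ∉ S := fun h => hdisj a h haA
            exact ⟨⟨by rw [Finset.card_insert_of_notMem haS, hScard]; omega,
              a, haA, Finset.mem_insert_self a S⟩, Finset.subset_insert a S⟩
        rw [degH, himg, Finset.card_image_of_injOn]
        intro a ha b hb h
        have h' : insert a S = insert b S := h
        have : a ∈ insert b S := h' ▸ Finset.mem_insert_self a S
        rcases Finset.mem_insert.1 this with h' | h'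
        · exact h'
        · exact absurd ha (hdisj a h')
      -- lower bound for every (k-1)-set
      have claim2 : ∀ S : Finset (Fin n), S.card = k - 1 → A.card ≤ degH E S := by
        intro S hScard
        by_cases hdis : ∀ x ∈ S, x ∉ A
        · rw [claim1 S hScard hdis]
        · push_neg at hdis
          obtain ⟨x, hxS, hxA⟩ := hdis
          have hsub : Sᶜ.image (fun v => insert v S) ⊆ E.filter (fun e => S ⊆ e) := by
            intro e he
            simp only [Finset.mem_image, Finset.mem_compl] at he
            obtain ⟨v, hvS, rfl⟩ := he
            simp only [hE, Finset.mem_filter, Finset.mem_powersetCard_univ]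
            exact ⟨⟨by rw [Finset.card_insert_of_notMem hvS, hScard]; omega,
              x, hxA, Finset.mem_insert_of_mem hxS⟩, Finset.subset_insert _ _⟩
          have hinj : (Sᶜ.image (fun v => insert v S)).card = Sᶜ.card := by
            apply Finset.card_image_of_injOn
            intro v hv w hw h
            simp only [Finset.coe_compl, Set.mem_compl_iff, Finset.mem_coe] at hv hw
            have h'' : insert v S = insert w S := h
            have : v ∈ insert w S := h'' ▸ Finset.mem_insert_self v S
            rcases Finset.mem_insert.1 this with h' | h'
            · exact h'
            · exact absurd h' hv
          have hcc : Sᶜ.card = n - (k - 1) := by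
            rw [Finset.card_compl, hScard]
            simp
          calc A.card ≤ n - (k - 1) := by omega
            _ = Sᶜ.card := hcc.symm
            _ = (Sᶜ.image (fun v => insert v S)).card := hinj.symm
            _ ≤ (E.filter (fun e => S ⊆ e)).card := Finset.card_le_card hsub
      -- a witness set disjoint from A
      have hAc : k - 1 ≤ Aᶜ.card := by
        rw [Finset.card_compl]
        simp only [Fintype.card_fin]
        omega
      obtain ⟨S₀, hS₀A, hS₀card⟩ := Finset.exists_subset_card_eq hAc
      have hS₀disj : ∀ x ∈ S₀, x ∉ A := fun x hx =>
        Finset.mem_compl.1 (hS₀A hx)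
      apply le_antisymm
      · apply Nat.sInf_le
        exact ⟨S₀, hS₀card, claim1 S₀ hS₀card hS₀disj⟩
      · apply le_csInf
        · exact ⟨A.card, S₀, hS₀card, claim1 S₀ hS₀card hS₀disj⟩
        · rintro b ⟨S, hScard, rfl⟩
          exact claim2 S hScard
    · -- degenerate case: no (k-1)-sets exist
      have hempty : {d : ℕ | ∃ S : Finset (Fin n), S.card = k - 1 ∧ degH E S = d} = ∅ := by
        rw [Set.eq_empty_iff_forall_notMem]
        rintro x ⟨S, hS, -⟩
        have h := Finset.card_le_univ S
        simp only [Finset.card_univ, Fintype.card_fin] at h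
        omega
      rw [hempty, Nat.sInf_empty]
      symm
      rw [hA]
      apply Nat.ceil_eq_zero.mpr
      have h1 : (n : ℝ) < 2 * ((k : ℝ) - l) := by
        have : (n : ℕ) < 2 * (k - l) := by omega
        have h2 : ((n : ℕ) : ℝ) < ((2 * (k - l) : ℕ) : ℝ) := by exact_mod_cast this
        push_cast [Nat.cast_sub hlk.le] at h2
        linarith
      have h2 : (0 : ℝ) < 2 * ((k : ℝ) - l) := by
        have : (0 : ℝ) < ((k - l : ℕ) : ℝ) := by exact_mod_cast (by omega : 0 < k - l)
        push_cast [Nat.cast_sub hlk.le] at this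
        linarith
      have := (div_lt_one h2).2 h1
      linarith
end

section
/- For all integers k ≥ 3 and 1 ≤ ℓ < k/2 and every γ > 0 there exists ξ = ξ(k,ℓ,γ) > 0 such that for all sufficiently large n the following holds: every k-uniform hypergraph H on n vertices with δ_{k−2}(H) ≥ ((4(k−ℓ)−1)/(4(k−ℓ)²) + γ)·C(n,2) is not (ℓ,ξ)-extremal. -/
open Finset

/-- `E` is `(ℓ,ξ)`-extremal: there is a vertex set `B` of size
`⌊(2(k-ℓ)-1)n/(2(k-ℓ))⌋` spanning at most `ξ·C(n,k)` edges. -/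
def IsExtremal {n : ℕ} (k l : ℕ) (ξ : ℝ) (E : Finset (Finset (Fin n))) : Prop :=
  ∃ B : Finset (Fin n), B.card = (2 * (k - l) - 1) * n / (2 * (k - l)) ∧
    ((E.filter fun e => e ⊆ B).card : ℝ) ≤ ξ * (Nat.choose n k)

/-! If `|B| = ⌊(1 - 1/(2(k-ℓ))) n⌋`, only about `(4(k-ℓ)-1)/(4(k-ℓ)²) · C(n,2)` pairs of
vertices are not inside `B`. An edge through a `(k-2)`-set `S ⊆ B` that leaves `B` is determined
by such a pair, namely `e \ S`, so the degree condition leaves every `(k-2)`-subset of `B` in at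
least `(γ/2) · C(n,2)` edges inside `B`. Double counting the pairs `S ⊆ e ⊆ B` then yields
`γ/(2 · 4^k · C(k,2)) · C(n,k)` edges inside `B`, too many for `ξ = γ/(4^(k+1) · C(k,2))`. -/

section Counting

variable {α : Type*} [DecidableEq α]

theorem card_filter_not_subset_add_choose [Fintype α] (B : Finset α) (r : ℕ) :
    #{p ∈ powersetCard r univ | ¬ p ⊆ B} + (#B).choose r = (Fintype.card α).choose r := by
  have hB : {p ∈ powersetCard r (univ : Finset α) | p ⊆ B} = B.powersetCard r := by
    ext p
    simp only [mem_filter, mem_powersetCard, subset_univ, true_and]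
    tauto
  rw [← card_powersetCard, ← hB, add_comm, card_filter_add_card_filter_not, card_powersetCard,
    card_univ]

theorem card_filter_superset_not_subset_le [Fintype α] {E : Finset (Finset α)} {S B : Finset α}
    {r : ℕ} (hE : ∀ e ∈ E, #e = #S + r) (hSB : S ⊆ B) :
    #{e ∈ E | S ⊆ e ∧ ¬ e ⊆ B} ≤ #{p ∈ powersetCard r univ | ¬ p ⊆ B} := by
  refine card_le_card_of_injOn (· \ S) (fun e he => ?_) (fun e₁ he₁ e₂ he₂ h => ?_)
  · simp only [coe_filter, Set.mem_ofPred_eq, mem_powersetCard, subset_univ, true_and] at he ⊢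
    obtain ⟨heE, hSe, heB⟩ := he
    refine ⟨by rw [card_sdiff_of_subset hSe, hE e heE]; omega, fun h => heB fun x hx => ?_⟩
    by_cases hxS : x ∈ S
    · exact hSB hxS
    · exact h (mem_sdiff.2 ⟨hx, hxS⟩)
  · simp only [coe_filter, Set.mem_ofPred_eq] at he₁ he₂ h
    rw [← union_sdiff_of_subset he₁.2.1, ← union_sdiff_of_subset he₂.2.1, h]

theorem sum_card_filter_superset_powersetCard {F : Finset (Finset α)} {B : Finset α} {k : ℕ}
    (r : ℕ) (hF : ∀ e ∈ F, #e = k ∧ e ⊆ B) :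
    ∑ S ∈ B.powersetCard r, #{e ∈ F | S ⊆ e} = #F * k.choose r := by
  have h := sum_card_bipartiteAbove_eq_sum_card_bipartiteBelow (· ⊆ ·)
    (s := B.powersetCard r) (t := F)
  simp only [bipartiteAbove, bipartiteBelow] at h
  rw [h, ← smul_eq_mul, ← sum_const]
  refine sum_congr rfl fun e he => ?_
  have hsub : {S ∈ B.powersetCard r | S ⊆ e} = e.powersetCard r := by
    ext S
    simp only [mem_filter, mem_powersetCard]
    exact ⟨fun h => ⟨h.2, h.1.2⟩, fun h => ⟨⟨h.1.trans (hF e he).2, h.2⟩, h.1⟩⟩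
  rw [hsub, card_powersetCard, (hF e he).1]

end Counting

theorem degH_add_choose_le {n r : ℕ} {E : Finset (Finset (Fin n))} {S B : Finset (Fin n)}
    (hE : ∀ e ∈ E, #e = #S + r) (hSB : S ⊆ B) :
    degH E S + (#B).choose r ≤ degH {e ∈ E | e ⊆ B} S + n.choose r := by
  have hsplit := card_filter_add_card_filter_not (s := {e ∈ E | S ⊆ e}) (p := (· ⊆ B))
  have hout := card_filter_superset_not_subset_le hE hSB
  have hcompl := card_filter_not_subset_add_choose B r
  simp only [filter_filter, Fintype.card_fin] at hsplit hcompl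
  rw [degH, degH, filter_filter, ← hsplit]
  simp only [and_comm (a := _ ⊆ B)]
  omega

theorem choose_le_pow_mul_choose_mul_choose_two {n b k : ℕ} (hk : 2 ≤ k) (hkn : 4 * k ≤ n)
    (hnb : n ≤ 2 * b + 2) : n.choose k ≤ 4 ^ k * (b.choose (k - 2) * n.choose 2) := by
  obtain ⟨r, rfl⟩ : ∃ r, k = r + 2 := ⟨k - 2, by omega⟩
  rw [Nat.add_sub_cancel]
  have hbr : (n : ℝ) / 4 ≤ (b + 1 - r : ℕ) := by
    rw [div_le_iff₀ (by norm_num)]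
    exact_mod_cast (by omega : n ≤ (b + 1 - r) * 4)
  have hn2 : (n : ℝ) ^ 2 / 16 ≤ n.choose 2 := by
    rw [Nat.cast_choose_two]
    have : (8 : ℝ) ≤ n := by exact_mod_cast (by omega : 8 ≤ n)
    nlinarith
  have hfac : (r.factorial : ℝ) ≤ (r + 2).factorial := by
    exact_mod_cast Nat.factorial_le (by omega)
  suffices (n.choose (r + 2) : ℝ) ≤ 4 ^ (r + 2) * (b.choose r * n.choose 2) by exact_mod_cast this
  calc (n.choose (r + 2) : ℝ)
      ≤ n ^ (r + 2) / (r + 2).factorial := Nat.choose_le_pow_div _ _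
    _ ≤ n ^ (r + 2) / r.factorial := by gcongr
    _ = 4 ^ (r + 2) * ((n / 4) ^ r / r.factorial * (n ^ 2 / 16)) := by
      rw [div_pow]; field_simp; ring
    _ ≤ 4 ^ (r + 2) * ((b + 1 - r : ℕ) ^ r / r.factorial * n.choose 2) := by gcongr
    _ ≤ 4 ^ (r + 2) * (b.choose r * n.choose 2) := by gcongr; exact Nat.pow_le_choose r b

theorem mul_choose_le_card_of_le_degH {n k : ℕ} {F : Finset (Finset (Fin n))}
    {B : Finset (Fin n)} {δ : ℝ} (hk : 2 ≤ k) (hkn : 4 * k ≤ n) (hnB : n ≤ 2 * #B + 2)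
    (hF : ∀ e ∈ F, #e = k ∧ e ⊆ B) (hδ : 0 ≤ δ)
    (hdeg : ∀ S ∈ B.powersetCard (k - 2), δ * n.choose 2 ≤ degH F S) :
    δ * n.choose k ≤ 4 ^ k * k.choose 2 * #F := by
  have hsum := card_nsmul_le_sum _ _ _ hdeg
  rw [card_powersetCard, nsmul_eq_mul] at hsum
  have hcount : ∑ S ∈ B.powersetCard (k - 2), (degH F S : ℝ) = #F * k.choose 2 := by
    rw [← Nat.choose_symm hk]
    exact_mod_cast sum_card_filter_superset_powersetCard (k - 2) hF
  have hsize : (n.choose k : ℝ) ≤ 4 ^ k * ((#B).choose (k - 2) * n.choose 2) := by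
    exact_mod_cast choose_le_pow_mul_choose_mul_choose_two hk hkn hnB
  calc δ * n.choose k
      ≤ δ * (4 ^ k * ((#B).choose (k - 2) * n.choose 2)) := by gcongr
    _ = 4 ^ k * ((#B).choose (k - 2) * (δ * n.choose 2)) := by ring
    _ ≤ 4 ^ k * (#F * k.choose 2) :=
      mul_le_mul_of_nonneg_left (hsum.trans_eq hcount) (by positivity)
    _ = 4 ^ k * k.choose 2 * #F := by ring

theorem mul_sub_one_sub_mul_sub_one_le {β γ N b : ℝ} (hγ : 0 < γ) (hγN : 3 ≤ γ * (N - 1))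
    (hβN : 2 ≤ β * N) (hb : β * N - 1 ≤ b) :
    N * (N - 1) - b * (b - 1) ≤ (1 - β ^ 2 + γ) * (N * (N - 1)) := by
  have hb2 : (β * N - 1) * (β * N - 2) ≤ b * (b - 1) :=
    mul_le_mul hb (by linarith) (by linarith) (by linarith)
  have hN : 0 ≤ N := by nlinarith
  nlinarith [mul_le_mul_of_nonneg_left hγN hN, mul_nonneg hN (sq_nonneg (β - 3 / 2))]

theorem mul_sub_one_le_cast_div (a d n : ℕ) : (a : ℝ) / d * n - 1 ≤ (a * n / d : ℕ) := by
  have h := Nat.sub_one_lt_floor (((a * n : ℕ) : ℝ) / (d : ℕ))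
  rw [Nat.floor_div_eq_div] at h
  push_cast at h
  rw [div_mul_eq_mul_div]
  linarith

theorem half_le_two_mul_sub_one_div {m : ℕ} (hm : 1 ≤ m) :
    (1 / 2 : ℝ) ≤ ((2 * m - 1 : ℕ) : ℝ) / (2 * m : ℕ) := by
  have : (1 : ℝ) ≤ m := by exact_mod_cast hm
  rw [le_div_iff₀ (by positivity)]
  push_cast [Nat.cast_sub (by omega : 1 ≤ 2 * m)]
  linarith

theorem le_two_mul_div_add_two {m : ℕ} (hm : 1 ≤ m) (n : ℕ) :
    n ≤ 2 * ((2 * m - 1) * n / (2 * m)) + 2 := by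
  have h := mul_sub_one_le_cast_div (2 * m - 1) (2 * m) n
  have hβ := half_le_two_mul_sub_one_div hm
  have : (n : ℝ) ≤ 2 * ((2 * m - 1) * n / (2 * m) : ℕ) + 2 := by nlinarith
  exact_mod_cast this

theorem choose_two_le_choose_two_div_add {m n : ℕ} {γ : ℝ} (hm : 1 ≤ m) (hγ : 0 < γ)
    (hγn : 3 ≤ γ * (n - 1)) (hn : 4 ≤ n) :
    (n.choose 2 : ℝ) ≤ ((2 * m - 1) * n / (2 * m)).choose 2
      + ((4 * (m : ℝ) - 1) / (4 * (m : ℝ) ^ 2) + γ) * n.choose 2 := by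
  set β : ℝ := ((2 * m - 1 : ℕ) : ℝ) / (2 * m : ℕ) with hβdef
  have hm1 : (1 : ℝ) ≤ m := by exact_mod_cast hm
  have hβ : 1 - β ^ 2 = (4 * m - 1) / (4 * m ^ 2) := by
    rw [hβdef]
    push_cast [Nat.cast_sub (by omega : 1 ≤ 2 * m)]
    field_simp
    ring
  have hβn : 2 ≤ β * n := by
    have : (4 : ℝ) ≤ n := by exact_mod_cast hn
    nlinarith [half_le_two_mul_sub_one_div hm]
  have h := mul_sub_one_sub_mul_sub_one_le hγ hγn hβn (mul_sub_one_le_cast_div _ _ n)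
  rw [Nat.cast_choose_two, Nat.cast_choose_two, ← hβ]
  linarith

theorem three_le_mul_cast_sub_one {γ : ℝ} {n : ℕ} (hγ : 0 < γ) (hn : ⌈3 / γ⌉₊ < n) :
    3 ≤ γ * (n - 1) := by
  have h : ((⌈3 / γ⌉₊ + 1 : ℕ) : ℝ) ≤ n := by exact_mod_cast hn
  push_cast at h
  rw [← div_le_iff₀' hγ]
  linarith [Nat.le_ceil (3 / γ)]

theorem stmt12_general (k l : ℕ) (hk : 3 ≤ k) (hl2 : 2 * l < k)
    (γ : ℝ) (hγ : 0 < γ) :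
    ∃ ξ : ℝ, 0 < ξ ∧ ∃ n₀ : ℕ, ∀ n : ℕ, n₀ ≤ n →
      ∀ E : Finset (Finset (Fin n)), (∀ e ∈ E, e.card = k) →
        (∀ S : Finset (Fin n), S.card = k - 2 →
          ((4 * ((k : ℝ) - l) - 1) / (4 * ((k : ℝ) - l) ^ 2) + γ) *
              (Nat.choose n 2) ≤ (degH E S : ℝ)) →
        ¬ IsExtremal k l ξ E := by
  have hC2 : (0 : ℝ) < k.choose 2 := by exact_mod_cast Nat.choose_pos (by omega)
  refine ⟨γ / (4 ^ (k + 1) * k.choose 2), by positivity, ⌈3 / (γ / 2)⌉₊ + 4 * k, ?_⟩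
  rintro n hn E hE hdeg ⟨B, hB, heB⟩
  have hkl : (k : ℝ) - l = (k - l : ℕ) := by rw [Nat.cast_sub (by omega)]
  have hgap := choose_two_le_choose_two_div_add (m := k - l) (n := n) (by omega) (half_pos hγ)
    (three_le_mul_cast_sub_one (half_pos hγ) (by omega)) (by omega)
  rw [← hB, ← hkl] at hgap
  have hlink : ∀ S ∈ B.powersetCard (k - 2),
      γ / 2 * n.choose 2 ≤ (degH {e ∈ E | e ⊆ B} S : ℝ) := by
    intro S hS
    rw [mem_powersetCard] at hS
    have hsplit : (degH E S + (#B).choose 2 : ℝ) ≤ degH {e ∈ E | e ⊆ B} S + n.choose 2 := by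
      exact_mod_cast degH_add_choose_le (fun e he => by rw [hE e he, hS.2]; omega) hS.1
    linarith [hdeg S hS.2]
  have hedges := mul_choose_le_card_of_le_degH (by omega) (by omega)
    (hB ▸ le_two_mul_div_add_two (by omega) n :)
    (fun e he => ⟨hE e (mem_filter.1 he).1, (mem_filter.1 he).2⟩) (half_pos hγ).le hlink
  have hnk : (0 : ℝ) < n.choose k := by exact_mod_cast Nat.choose_pos (by omega)
  have : γ / 2 * n.choose k ≤ γ / 4 * n.choose k := calc
    _ ≤ 4 ^ k * k.choose 2 * (#{e ∈ E | e ⊆ B} : ℝ) := hedges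
    _ ≤ 4 ^ k * k.choose 2 * (γ / (4 ^ (k + 1) * k.choose 2) * n.choose k) := by gcongr
    _ = γ / 4 * n.choose k := by field_simp; ring
  nlinarith

theorem stmt12 (k l : ℕ) (hk : 3 ≤ k) (hl1 : 1 ≤ l) (hl2 : 2 * l < k)
    (γ : ℝ) (hγ : 0 < γ) :
    ∃ ξ : ℝ, 0 < ξ ∧ ∃ n₀ : ℕ, ∀ n : ℕ, n₀ ≤ n →
      ∀ E : Finset (Finset (Fin n)), (∀ e ∈ E, e.card = k) →
        (∀ S : Finset (Fin n), S.card = k - 2 →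
          ((4 * ((k : ℝ) - l) - 1) / (4 * ((k : ℝ) - l) ^ 2) + γ) *
              (Nat.choose n 2) ≤ (degH E S : ℝ)) →
        ¬ IsExtremal k l ξ E :=
  stmt12_general k l hk hl2 γ hγ
end
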